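/- For every n > 1, the number of n×n magog matrices whose (1,n) entry equals 1 equals the number of n×n magog matrices whose (1,n−1) entry equals 1, i.e. |Magog_n(1,n)| = |Magog_n(1,n−1)|. -/

import Mathlib

/-- An `n × n` square sign matrix: a `{0, 1, -1}`-matrix whose rows and columns
all sum to 1, whose partial column sums lie in `{0, 1}`, and whose partial row
sums are nonnegative. -/
def IsSquareSign (n : ℕ) (A : Fin n → Fin n → ℤ) : Prop :=
  (∀ i j, A i j = -1 ∨ A i j = 0 ∨ A i j = 1) ∧
  (∀ j, ∑ i, A i j = 1) ∧
  (∀ i, ∑ j, A i j = 1) ∧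
  (∀ i j : Fin n, 0 ≤ ∑ i' ∈ Finset.Iic i, A i' j ∧ ∑ i' ∈ Finset.Iic i, A i' j ≤ 1) ∧
  (∀ i j : Fin n, 0 ≤ ∑ j' ∈ Finset.Iic j, A i j')

/-- An `n × n` magog matrix: a square sign matrix satisfying the
`(i,j)`-special inequalities (stated here with 0-based indices `i, j`,
corresponding to the paper's 1-based `i+1, j+1` with `1 ≤ i, j ≤ n-2`). -/
def IsMagog (n : ℕ) (A : Fin n → Fin n → ℤ) : Prop :=
  IsSquareSign n A ∧
  ∀ (i j : ℕ) (hi : i + 2 < n) (hj : j + 2 < n),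
    0 ≤ (∑ j' ∈ Finset.Iic (⟨j, by omega⟩ : Fin n), A ⟨i + 1, by omega⟩ j')
      + (∑ i' ∈ Finset.Iic (⟨i + 1, by omega⟩ : Fin n), A i' ⟨j + 1, by omega⟩)
      - (∑ i' ∈ Finset.Iic (⟨i, by omega⟩ : Fin n), A i' ⟨j, by omega⟩)

/-!
Moving the `1` of the first row from the last column to the one before it, and compensating in
the second row (`+1` in the last column, `-1` in the one before), is a bijection between the two
sets; the reverse move is its inverse. The move keeps all row and column sums. Partial column sums
change only in the first row, which stays a unit vector, and partial sums in `[0, 1]` already force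
the entries into `{-1, 0, 1}`. Partial row sums change only in the last two columns, where they are
nonnegative for every matrix with entries `≤ 1` and row sums `1`. The special inequalities only see
partial row sums before the last two columns, partial column sums of the first two rows together,
and columns other than the last two, so none of their terms move.
-/

open Finset

theorem eq_neg_one_or_zero_or_one_of_sum_Iic {α : Type*} [LinearOrder α]
    [LocallyFiniteOrderBot α] [PredOrder α] {f : α → ℤ}
    (hf : ∀ a, 0 ≤ ∑ b ∈ Iic a, f b ∧ ∑ b ∈ Iic a, f b ≤ 1) (a : α) :
    f a = -1 ∨ f a = 0 ∨ f a = 1 := by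
  have hIic : ∑ b ∈ Iic a, f b = ∑ b ∈ Iio a, f b + f a := by
    rw [← Iio_insert, sum_insert notMem_Iio_self, add_comm]
  have hIio : 0 ≤ ∑ b ∈ Iio a, f b ∧ ∑ b ∈ Iio a, f b ≤ 1 := by
    by_cases ha : IsMin a
    · simp [Iio_eq_empty.2 ha]
    · rw [← Iic_pred_eq_Iio_of_not_isMin ha]
      exact hf _
  have := hf a
  omega

variable {n : ℕ}

theorem sum_Iic_nonneg_of_le_one {f : Fin n → ℤ} (hf : ∀ j, f j ≤ 1)
    (hsum : ∑ j, f j = 1) {j : Fin n} (hj : n - 2 ≤ j) : 0 ≤ ∑ j' ∈ Iic j, f j' := by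
  have hcard : #(Iic j)ᶜ ≤ 1 := by
    rw [card_compl, Fintype.card_fin, Fin.card_Iic]
    omega
  have htail : ∑ j' ∈ (Iic j)ᶜ, f j' ≤ 1 :=
    calc ∑ j' ∈ (Iic j)ᶜ, f j' ≤ #(Iic j)ᶜ • 1 := sum_le_card_nsmul _ _ _ fun j _ => hf j
      _ ≤ 1 := by simpa using hcard
  have := sum_add_sum_compl (Iic j) f
  omega

theorem Fin.Iic_eq_singleton_of_val_eq_zero {i : Fin n} (hi : (i : ℕ) = 0) :
    Iic i = {i} := by
  ext x
  simp [Fin.le_def, Fin.ext_iff, hi]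

theorem IsSquareSign.apply_eq_single_of_val_eq_zero {A : Fin n → Fin n → ℤ}
    (hA : IsSquareSign n A) {i₀ p : Fin n} (h₀ : (i₀ : ℕ) = 0) (hp : A i₀ p = 1) (j : Fin n) :
    A i₀ j = (Pi.single p 1 : Fin n → ℤ) j := by
  have hnonneg : ∀ j, 0 ≤ A i₀ j := fun j => by
    simpa [Fin.Iic_eq_singleton_of_val_eq_zero h₀] using (hA.2.2.2.1 i₀ j).1
  have hrest : ∑ j ∈ univ.erase p, A i₀ j = 0 := by
    rw [sum_erase_eq_sub (mem_univ p), hA.2.2.1, hp, sub_self]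
  rcases eq_or_ne j p with rfl | hj
  · simp [hp]
  · rw [Pi.single_eq_of_ne hj]
    exact (sum_eq_zero_iff_of_nonneg fun j _ => hnonneg j).1 hrest j (by simp [hj])

section SquareMove

def squareMove (i₀ i₁ p q : Fin n) (A : Fin n → Fin n → ℤ) : Fin n → Fin n → ℤ :=
  fun i j => A i j +
    (Pi.single i₀ 1 - Pi.single i₁ 1 : Fin n → ℤ) i * (Pi.single q 1 - Pi.single p 1 : Fin n → ℤ) j

variable {i₀ i₁ p q : Fin n} (A : Fin n → Fin n → ℤ)

theorem squareMove_squareMove : squareMove i₀ i₁ q p (squareMove i₀ i₁ p q A) = A := by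
  funext i j
  simp only [squareMove, Pi.sub_apply]
  ring

theorem sum_squareMove_col_of_mem {s : Finset (Fin n)} (h₀ : i₀ ∈ s) (h₁ : i₁ ∈ s) (j : Fin n) :
    ∑ i ∈ s, squareMove i₀ i₁ p q A i j = ∑ i ∈ s, A i j := by
  simp [squareMove, sum_add_distrib, ← sum_mul, h₀, h₁]

theorem sum_squareMove_col_of_ne (s : Finset (Fin n)) {j : Fin n} (hp : j ≠ p) (hq : j ≠ q) :
    ∑ i ∈ s, squareMove i₀ i₁ p q A i j = ∑ i ∈ s, A i j := by
  simp [squareMove, hp, hq]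

theorem sum_squareMove_row_of_mem {s : Finset (Fin n)} (hp : p ∈ s) (hq : q ∈ s) (i : Fin n) :
    ∑ j ∈ s, squareMove i₀ i₁ p q A i j = ∑ j ∈ s, A i j := by
  simp [squareMove, sum_add_distrib, ← mul_sum, hp, hq]

theorem sum_squareMove_row_of_notMem {s : Finset (Fin n)} (hp : p ∉ s) (hq : q ∉ s) (i : Fin n) :
    ∑ j ∈ s, squareMove i₀ i₁ p q A i j = ∑ j ∈ s, A i j := by
  simp [squareMove, sum_add_distrib, ← mul_sum, hp, hq]

end SquareMove

variable {i₀ i₁ p q : Fin n}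

theorem IsSquareSign.squareMove_apply_first_row {A : Fin n → Fin n → ℤ} (hA : IsSquareSign n A)
    (h₀ : (i₀ : ℕ) = 0) (h₁ : (i₁ : ℕ) = 1) (hAp : A i₀ p = 1) (j : Fin n) :
    squareMove i₀ i₁ p q A i₀ j = (Pi.single q 1 : Fin n → ℤ) j := by
  have h₀₁ : i₀ ≠ i₁ := Fin.ne_of_val_ne (by omega)
  simp [squareMove, hA.apply_eq_single_of_val_eq_zero h₀ hAp, h₀₁]

theorem isMagog_squareMove {A : Fin n → Fin n → ℤ} (hA : IsMagog n A) (h₀ : (i₀ : ℕ) = 0)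
    (h₁ : (i₁ : ℕ) = 1) (hp : n - 2 ≤ p) (hq : n - 2 ≤ q) (hAp : A i₀ p = 1) :
    IsMagog n (squareMove i₀ i₁ p q A) := by
  have hB₀ := hA.1.squareMove_apply_first_row (q := q) h₀ h₁ hAp
  obtain ⟨⟨-, hcol, hrow, hcolPart, hrowPart⟩, hspecial⟩ := hA
  set B := squareMove i₀ i₁ p q A
  have hmem₀ (i : Fin n) : i₀ ∈ Iic i := by rw [mem_Iic, Fin.le_def]; omega
  have hmem₁ {i : Fin n} (hi : (i : ℕ) ≠ 0) : i₁ ∈ Iic i := by rw [mem_Iic, Fin.le_def]; omega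
  have hnotMem {j c : Fin n} (hj : (j : ℕ) + 2 < n) (hc : n - 2 ≤ c) : c ∉ Iic j := by
    rw [mem_Iic, Fin.le_def]; omega
  have hcolPart' : ∀ i j, 0 ≤ ∑ i' ∈ Iic i, B i' j ∧ ∑ i' ∈ Iic i, B i' j ≤ 1 := by
    intro i j
    by_cases hi : (i : ℕ) = 0
    · obtain rfl : i = i₀ := Fin.ext (hi.trans h₀.symm)
      rw [Fin.Iic_eq_singleton_of_val_eq_zero hi, sum_singleton, hB₀, Pi.single_apply]
      split_ifs <;> norm_num
    · rw [sum_squareMove_col_of_mem A (hmem₀ i) (hmem₁ hi)]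
      exact hcolPart i j
  have hentry i j := eq_neg_one_or_zero_or_one_of_sum_Iic (fun i => hcolPart' i j) i
  have hrow' i : ∑ j, B i j = 1 :=
    (sum_squareMove_row_of_mem A (mem_univ p) (mem_univ q) i).trans (hrow i)
  have hrowPart_eq {j : Fin n} (hj : (j : ℕ) + 2 < n) (i : Fin n) :
      ∑ j' ∈ Iic j, B i j' = ∑ j' ∈ Iic j, A i j' :=
    sum_squareMove_row_of_notMem A (hnotMem hj hp) (hnotMem hj hq) i
  refine ⟨⟨hentry, fun j => ?_, hrow', hcolPart', fun i j => ?_⟩, fun i j hi hj => ?_⟩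
  · exact (sum_squareMove_col_of_mem A (mem_univ i₀) (mem_univ i₁) j).trans (hcol j)
  · by_cases hj : (j : ℕ) + 2 < n
    · exact (hrowPart_eq hj i).symm ▸ hrowPart i j
    · exact sum_Iic_nonneg_of_le_one (fun j => by rcases hentry i j with h | h | h <;> omega)
        (hrow' i) (by omega)
  · rw [hrowPart_eq (by simpa using hj),
      sum_squareMove_col_of_mem A (hmem₀ _) (hmem₁ (by simp)),
      sum_squareMove_col_of_ne A _ (by simp [Fin.ext_iff]; omega) (by simp [Fin.ext_iff]; omega)]
    exact hspecial i j hi hj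

def magogFirstRowEquiv (h₀ : (i₀ : ℕ) = 0) (h₁ : (i₁ : ℕ) = 1) (hp : n - 2 ≤ p)
    (hq : n - 2 ≤ q) :
    {A : Fin n → Fin n → ℤ // IsMagog n A ∧ A i₀ p = 1} ≃
      {A : Fin n → Fin n → ℤ // IsMagog n A ∧ A i₀ q = 1} where
  toFun A := ⟨squareMove i₀ i₁ p q A, isMagog_squareMove A.2.1 h₀ h₁ hp hq A.2.2,
    by simp [A.2.1.1.squareMove_apply_first_row h₀ h₁ A.2.2]⟩
  invFun A := ⟨squareMove i₀ i₁ q p A, isMagog_squareMove A.2.1 h₀ h₁ hq hp A.2.2,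
    by simp [A.2.1.1.squareMove_apply_first_row h₀ h₁ A.2.2]⟩
  left_inv A := Subtype.ext (squareMove_squareMove A.1)
  right_inv A := Subtype.ext (squareMove_squareMove A.1)

/-- `|Magog_n(1,n)| = |Magog_n(1,n-1)|`: the number of `n × n` magog matrices
whose `(1,n)` entry is `1` equals the number whose `(1,n-1)` entry is `1`. -/
theorem card_magog_first_row_last_cols (n : ℕ) (hn : 1 < n) :
    Nat.card {A : Fin n → Fin n → ℤ //
        IsMagog n A ∧ A ⟨0, by omega⟩ ⟨n - 1, by omega⟩ = 1} =
      Nat.card {A : Fin n → Fin n → ℤ //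
        IsMagog n A ∧ A ⟨0, by omega⟩ ⟨n - 2, by omega⟩ = 1} :=
  Nat.card_congr (magogFirstRowEquiv (i₁ := ⟨1, hn⟩) rfl rfl (Nat.sub_le_sub_left one_le_two n) le_rfl)
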